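/- Let Z be a limit permutation and let D_Z ⊆ [0,1]² be the set of all pairs (x₁,x₂) such that the cdfs Z(x₁,·) and Z(x₂,·) have a common point of discontinuity. Then D_Z is Lebesgue measurable in [0,1]² and has Lebesgue measure zero. -/

import Mathlib

open MeasureTheory Filter Set

open scoped Classical

noncomputable section

/-- The number of occurrences of the pattern `τ` in the permutation `π`:
increasing tuples `x₁ < ... < x_k` such that `π` restricted to them has the
same relative order as `τ`. -/
def occCount {k n : ℕ} (τ : Equiv.Perm (Fin k)) (π : Equiv.Perm (Fin n)) : ℕ :=
  Set.ncard {x : Fin k → Fin n | StrictMono x ∧ ∀ i j : Fin k, π (x i) < π (x j) ↔ τ i < τ j}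

/-- The subpermutation density `t(τ, π)`. -/
def densP {k n : ℕ} (τ : Equiv.Perm (Fin k)) (π : Equiv.Perm (Fin n)) : ℝ :=
  if k ≤ n then (occCount τ π : ℝ) / (n.choose k : ℝ) else 0

/-- `F` is a cumulative distribution function on `[0,1]`: non-decreasing,
left-continuous, `F 0 = 0`, with values in `[0,1]`. -/
def IsCDF (F : ℝ → ℝ) : Prop :=
  MonotoneOn F (Set.Icc 0 1) ∧
    (∀ a ∈ Set.Ioc (0:ℝ) 1, Tendsto F (nhdsWithin a (Set.Iio a)) (nhds (F a))) ∧
    F 0 = 0 ∧ ∀ y ∈ Set.Icc (0:ℝ) 1, F y ∈ Set.Icc (0:ℝ) 1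

/-- `Z` is a limit permutation. -/
def LimitPerm (Z : ℝ → ℝ → ℝ) : Prop :=
  Measurable (fun p : Set.Icc (0:ℝ) 1 × Set.Icc (0:ℝ) 1 => Z (p.1 : ℝ) (p.2 : ℝ)) ∧
    (∀ x ∈ Set.Icc (0:ℝ) 1,
      IsCDF (Z x) ∧ Tendsto (Z x) (nhdsWithin 0 (Set.Ioi 0)) (nhds (Z x 0)) ∧ Z x 1 = 1) ∧
    ∀ y ∈ Set.Icc (0:ℝ) 1, (∫ x in Set.Icc (0:ℝ) 1, Z x y) = y

/-- `μ x` is the Lebesgue–Stieltjes probability measure of the cdf `Z x`, for each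
`x ∈ [0,1]`. -/
def LSFamily (Z : ℝ → ℝ → ℝ) (μ : ℝ → Measure ℝ) : Prop :=
  ∀ x ∈ Set.Icc (0:ℝ) 1,
    IsProbabilityMeasure (μ x) ∧ μ x (Set.Icc 0 1) = 1 ∧
      ∀ a b : ℝ, 0 ≤ a → a ≤ b → b ≤ 1 →
        μ x (Set.Ico a b) = ENNReal.ofReal (Z x b - Z x a)

/-- The set of increasing `m`-tuples `0 ≤ y₁ < y₂ < ... < y_m ≤ 1`. -/
def incSimplex (m : ℕ) : Set (Fin m → ℝ) :=
  {y | StrictMono y ∧ ∀ i, y i ∈ Set.Icc (0:ℝ) 1}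

/-- The core function `L_{τ,Z}` of a limit permutation, expressed through the
associated family `μ` of Lebesgue–Stieltjes measures: the product measure
`μ_{x_{τ⁻¹(1)}} × ... × μ_{x_{τ⁻¹(m)}}` of the simplex `{y₁ < ... < y_m}`. -/
def coreFn {m : ℕ} (τ : Equiv.Perm (Fin m)) (μ : ℝ → Measure ℝ) (x : Fin m → ℝ) : ℝ :=
  ((Measure.pi fun i => μ (x (τ.symm i))) (incSimplex m)).toReal

/-- The subpermutation density `t(τ, Z)` of `τ` in a limit permutation `Z`,
expressed through the associated family `μ` of Lebesgue–Stieltjes measures. -/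
def densL {m : ℕ} (τ : Equiv.Perm (Fin m)) (μ : ℝ → Measure ℝ) : ℝ :=
  (Nat.factorial m : ℝ) * ∫ x in incSimplex m, coreFn τ μ x

/-- The rectangular distance between two families of measures (coming from
functions `[0,1]² → [0,1]` whose sections are cdfs). -/
def rectDist (μ₁ μ₂ : ℝ → Measure ℝ) : ℝ :=
  sSup {d : ℝ | ∃ x₁ x₂ α₁ α₂ : ℝ,
    0 ≤ x₁ ∧ x₁ < x₂ ∧ x₂ ≤ 1 ∧ 0 ≤ α₁ ∧ α₁ < α₂ ∧ α₂ ≤ 1 ∧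
    d = |(∫ x in Set.Icc x₁ x₂, (μ₁ x (Set.Icc α₁ α₂)).toReal) -
          ∫ x in Set.Icc x₁ x₂, (μ₂ x (Set.Icc α₁ α₂)).toReal|}

/-- A weighted permutation of order `k`; entries are 0-based, so `Q i j`
stands for `Q(i+1, j+1)` in the 1-based notation. -/
def WeightedPerm {k : ℕ} (Q : Fin k → Fin k → ℝ) : Prop :=
  (∀ i j, Q i j ∈ Set.Icc (0:ℝ) 1) ∧ (∀ i, Monotone (Q i)) ∧
    ∀ j : Fin k, (j : ℝ) ≤ ∑ i, Q i j ∧ ∑ i, Q i j ≤ (j : ℝ) + 1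

/-- `Q` extended by the conventions `Q(i,0) = 0` and `Q(i,a) = 1` for `a ≥ k+1`;
the second argument `a : ℕ` is 1-based. -/
def Qext {k : ℕ} (Q : Fin k → Fin k → ℝ) (i : Fin k) (a : ℕ) : ℝ :=
  if h : 1 ≤ a ∧ a ≤ k then Q i ⟨a - 1, by omega⟩ else if a = 0 then 0 else 1

/-- The subpermutation density `t(τ, Q)` of `τ` in a weighted permutation `Q`. -/
def densW {m n : ℕ} (τ : Equiv.Perm (Fin m)) (Q : Fin n → Fin n → ℝ) : ℝ :=
  (n.choose m : ℝ)⁻¹ *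
    ∑ X ∈ Finset.univ.filter (fun X : Fin m → Fin n => StrictMono X),
      ∑ A ∈ Finset.univ.filter (fun A : Fin m → Fin (n + 1) => StrictMono A),
        ∏ i : Fin m, (Qext Q (X i) ((A (τ i) : ℕ) + 1) - Qext Q (X i) (A (τ i) : ℕ))

/-- The rectangular distance between two square matrices of order `n`
(in particular, weighted permutations): `a` and `b` range over `[n+1]`
(1-based) with `a < b`, and `S` over the subintervals of `[n]`. -/
def rectDistW {n : ℕ} (Q₁ Q₂ : Fin n → Fin n → ℝ) : ℝ :=
  sSup {d : ℝ | ∃ (lo hi : Fin n) (a b : ℕ), 1 ≤ a ∧ a < b ∧ b ≤ n + 1 ∧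
    d = (n : ℝ)⁻¹ * |∑ x ∈ Finset.Icc lo hi,
        ((Qext Q₁ x b - Qext Q₁ x a) - (Qext Q₂ x b - Qext Q₂ x a))|}

/-- The bipartite adjacency matrix `Q_σ` of the graph of a permutation:
`Q_σ(a,b) = 1` iff `σ(a) < b` (1-based). -/
def QofPerm {n : ℕ} (σ : Equiv.Perm (Fin n)) : Fin n → Fin n → ℝ :=
  fun i j => if (σ i : ℕ) < (j : ℕ) then 1 else 0

/-- The step function `Z_Q : [0,1]² → [0,1]` associated with a matrix `Q` of
order `n`: `Z_Q(x,y) = 0` if `y = 0`, `Z_Q(0,y) = ⌈ny⌉/n`, and otherwise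
`Z_Q(x,y) = Q(⌈nx⌉, ⌈ny⌉)` (1-based, with the conventions of `Qext`). -/
def stepW {n : ℕ} (Q : Fin n → Fin n → ℝ) : ℝ → ℝ → ℝ := fun x y =>
  if y = 0 then 0
  else if x = 0 then ((⌈(n : ℝ) * y⌉ : ℤ) : ℝ) / (n : ℝ)
  else if h : ∃ i : Fin n, ((i : ℕ) + 1 : ℤ) = ⌈(n : ℝ) * x⌉ then
    Qext Q h.choose (⌈(n : ℝ) * y⌉).toNat
  else 0

/-- The family of Lebesgue–Stieltjes measures of the step function `Z_Q`:
for `x` with `⌈nx⌉ = i ∈ [n]`, the cdf `Z_Q(x,·)` is a step function whose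
Lebesgue–Stieltjes measure places mass `Q(i,j+1) - Q(i,j)` at the point `j/n`
for `0 ≤ j ≤ n`. -/
def stepWMeasures {n : ℕ} (Q : Fin n → Fin n → ℝ) : ℝ → Measure ℝ := fun x =>
  if h : ∃ i : Fin n, ((i : ℕ) + 1 : ℤ) = ⌈(n : ℝ) * x⌉ then
    ∑ j : Fin (n + 1),
      ENNReal.ofReal (Qext Q h.choose ((j : ℕ) + 1) - Qext Q h.choose (j : ℕ)) •
        Measure.dirac ((j : ℝ) / (n : ℝ))
  else Measure.dirac 0

/-- The step function `Z_σ` of a permutation `σ`. -/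
def stepFun {n : ℕ} (σ : Equiv.Perm (Fin n)) : ℝ → ℝ → ℝ := stepW (QofPerm σ)

/-- The family of Lebesgue–Stieltjes measures of the step function `Z_σ`. -/
def stepMeasures {n : ℕ} (σ : Equiv.Perm (Fin n)) : ℝ → Measure ℝ :=
  stepWMeasures (QofPerm σ)

/-- The joint law of `((X₁,...,Xₙ), (a₁,...,aₙ))`, where the `Xᵢ` are i.i.d.
uniform on `[0,1]` and, conditionally on the `Xᵢ`, the `aᵢ` are independent
with `aᵢ` distributed according to `μ (Xᵢ)`. -/
def jointMeasure (μ : ℝ → Measure ℝ) (n : ℕ) : Measure ((Fin n → ℝ) × (Fin n → ℝ)) :=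
  (Measure.pi fun _ : Fin n => volume.restrict (Set.Icc (0:ℝ) 1)).bind fun X =>
    (Measure.pi fun i => μ (X i)).map fun a => (X, a)

/-- The (1-based) rank of `v i` among `v 1, ..., v n`. -/
def rankOf {n : ℕ} (v : Fin n → ℝ) (i : Fin n) : ℕ :=
  (Finset.univ.filter fun j => v j ≤ v i).card

/-- `π` is the permutation `S ∘ R⁻¹` determined by the sample
`ω = ((X₁,...,Xₙ), (a₁,...,aₙ))`, where `R` and `S` are the rank functions
of the `Xᵢ` and the `aᵢ`. -/
def IsSamplePerm {n : ℕ} (ω : (Fin n → ℝ) × (Fin n → ℝ)) (π : Equiv.Perm (Fin n)) : Prop :=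
  ∀ i p q : Fin n, rankOf ω.1 i = (p : ℕ) + 1 → rankOf ω.2 i = (q : ℕ) + 1 → π p = q

/-- The `Z`-random permutation determined by the sample `ω`; it is well defined
(the witness is unique) off a null set. -/
def samplePerm {n : ℕ} (ω : (Fin n → ℝ) × (Fin n → ℝ)) : Equiv.Perm (Fin n) :=
  if h : ∃! π : Equiv.Perm (Fin n), IsSamplePerm ω π then h.choose else 1

/-- The subinterval `{lo+1, ..., hi}` of `[n]` (as a finset of 0-based indices
`x` with `lo ≤ x < hi`). -/
def intervalFin (n : ℕ) (lo hi : ℕ) : Finset (Fin n) :=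
  Finset.univ.filter fun x => lo ≤ (x : ℕ) ∧ (x : ℕ) < hi

/-- `c : Fin (k+1) → ℕ` is the sequence of cut points of an equitable
`k`-partition of `[n]` into consecutive intervals `C_i = {c i + 1, ..., c (i+1)}`. -/
def IsEquipartition {k : ℕ} (n : ℕ) (c : Fin (k + 1) → ℕ) : Prop :=
  Monotone c ∧ c 0 = 0 ∧ c (Fin.last k) = n ∧
    ∀ i j : Fin k, ((intervalFin n (c i.castSucc) (c i.succ)).card : ℤ) -
      ((intervalFin n (c j.castSucc) (c j.succ)).card : ℤ) ≤ 1

/-- The number of edges of the graph `G_σ` between `A` and `B`: pairs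
`(a,b) ∈ A × B` with `σ(a) < b` (1-based). -/
def edgeCount {n : ℕ} (σ : Equiv.Perm (Fin n)) (A B : Finset (Fin n)) : ℕ :=
  ((A ×ˢ B).filter fun p => (σ p.1 : ℕ) < (p.2 : ℕ)).card

/-- The partition matrix `Q_{σ,P}` of `σ` induced by the partition with cut
points `c`. -/
def partMatrix {n k : ℕ} (σ : Equiv.Perm (Fin n)) (c : Fin (k + 1) → ℕ) :
    Fin k → Fin k → ℝ := fun u w =>
  (edgeCount σ (intervalFin n (c u.castSucc) (c u.succ))
      (intervalFin n (c w.castSucc) (c w.succ)) : ℝ) /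
    (((intervalFin n (c u.castSucc) (c u.succ)).card : ℝ) *
      ((intervalFin n (c w.castSucc) (c w.succ)).card : ℝ))

/-- The blow-up matrix `K(P,Q) : [n]² → [0,1]` of the matrix `Q : [k]² → [0,1]`
with respect to the partition with cut points `c`. -/
def blowup {n k : ℕ} (c : Fin (k + 1) → ℕ) (Q : Fin k → Fin k → ℝ) :
    Fin n → Fin n → ℝ := fun x y =>
  if hx : ∃ i : Fin k, c i.castSucc ≤ (x : ℕ) ∧ (x : ℕ) < c i.succ then
    if hy : ∃ j : Fin k, c j.castSucc ≤ (y : ℕ) ∧ (y : ℕ) < c j.succ then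
      Q hx.choose hy.choose
    else 0
  else 0

/-- The right limit `lim_{α' → α⁺} F(α')` of a (monotone) cdf `F` on `[0,1]`,
with the convention that the limit at `α = 1` is `1`. -/
def cdfRightLim (F : ℝ → ℝ) (α : ℝ) : ℝ :=
  if α = 1 then 1 else sInf (F '' Set.Ioc α 1)

/-- The cdf `F` is discontinuous at `α`: `lim_{α' → α⁺} F(α') > F(α)`. -/
def cdfDiscontAt (F : ℝ → ℝ) (α : ℝ) : Prop :=
  F α < cdfRightLim F α

/-!
If `Z(x₁,·)` and `Z(x₂,·)` both jump at `α < 1`, then for every `m` the grid cell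
`[k/m, (k+1)/m)` containing `α` has mass at least the respective jump under both laws, so
`S_m(x₁,x₂) = ∑ₖ μ_{x₁}[k/m, (k+1)/m) · μ_{x₂}[k/m, (k+1)/m)` is bounded below by the product
of the two jumps, uniformly in `m`. On the other hand `∫ Z(x,y) dx = y` says that each cell has
average mass `1/m`, so by Fubini `∫∫ S_m = m · (1/m)² = 1/m → 0`. Hence `infₘ S_m = 0` almost
everywhere, while it is positive on the common-discontinuity set.
-/

open scoped ENNReal Topology

theorem ae_iInf_eq_zero_of_tendsto_lintegral {α ι : Type*} [MeasurableSpace α] [Countable ι]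
    {μ : Measure α} {l : Filter ι} [l.NeBot] {f : ι → α → ℝ≥0∞}
    (hf : ∀ i, AEMeasurable (f i) μ) (h : Tendsto (fun i => ∫⁻ x, f i x ∂μ) l (𝓝 0)) :
    ∀ᵐ x ∂μ, ⨅ i, f i x = 0 := by
  have hzero : ∫⁻ x, ⨅ i, f i x ∂μ = 0 :=
    le_antisymm (ge_of_tendsto' h fun i => lintegral_mono fun x => iInf_le _ i) bot_le
  exact (lintegral_eq_zero_iff' (AEMeasurable.iInf hf)).1 hzero

theorem natCast_div_mem_Icc {k m : ℕ} (hk : k ≤ m) : (k / m : ℝ) ∈ Icc (0 : ℝ) 1 :=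
  ⟨by positivity, div_le_one_of_le₀ (by exact_mod_cast hk) (by positivity)⟩

theorem exists_natCast_div_le_lt {m : ℕ} (hm : m ≠ 0) {α : ℝ} (hα : α ∈ Ico (0 : ℝ) 1) :
    ∃ k < m, (k / m : ℝ) ≤ α ∧ α < ((k + 1 : ℕ) / m : ℝ) := by
  have hm' : (0 : ℝ) < m := by positivity
  have hmα : 0 ≤ (m : ℝ) * α := mul_nonneg hm'.le hα.1
  refine ⟨⌊(m : ℝ) * α⌋₊, ?_, ?_, ?_⟩
  · rw [Nat.floor_lt hmα]
    nlinarith [hα.2]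
  · rw [div_le_iff₀ hm', mul_comm α]
    exact Nat.floor_le hmα
  · rw [lt_div_iff₀ hm', mul_comm]
    push_cast
    exact Nat.lt_floor_add_one _

section CDF

variable {F : ℝ → ℝ} {α : ℝ}

theorem IsCDF.cdfRightLim_le (hF : IsCDF F) {b : ℝ} (hα : 0 ≤ α) (hαb : α < b) (hb : b ≤ 1) :
    cdfRightLim F α ≤ F b := by
  rw [cdfRightLim, if_neg (hαb.trans_le hb).ne]
  refine csInf_le ⟨0, ?_⟩ ⟨b, ⟨hαb, hb⟩, rfl⟩
  rintro _ ⟨t, ht, rfl⟩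
  exact (hF.2.2.2 t ⟨hα.trans ht.1.le, ht.2⟩).1

theorem IsCDF.cdfRightLim_sub_le_sub (hF : IsCDF F) {a b : ℝ} (ha : 0 ≤ a) (haα : a ≤ α)
    (hαb : α < b) (hb : b ≤ 1) : cdfRightLim F α - F α ≤ F b - F a := by
  have hmono : F a ≤ F α :=
    hF.1 ⟨ha, haα.trans (hαb.le.trans hb)⟩ ⟨ha.trans haα, hαb.le.trans hb⟩ haα
  linarith [hF.cdfRightLim_le (ha.trans haα) hαb hb]

theorem cdfDiscontAt.ne_one (h1 : F 1 = 1) (h : cdfDiscontAt F α) : α ≠ 1 := by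
  rintro rfl
  simp [cdfDiscontAt, cdfRightLim, h1] at h

end CDF

def cellMass (Z : ℝ → ℝ → ℝ) (m k : ℕ) (x : ℝ) : ℝ≥0∞ :=
  ENNReal.ofReal (Z x ((k + 1 : ℕ) / m) - Z x (k / m))

/-- The probability that independent samples of the laws with cdfs `Z p.1` and `Z p.2` fall
into the same cell of the grid of mesh `1/m`. -/
def sameCellProb (Z : ℝ → ℝ → ℝ) (m : ℕ) (p : ℝ × ℝ) : ℝ≥0∞ :=
  ∑ k ∈ Finset.range m, cellMass Z m k p.1 * cellMass Z m k p.2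

namespace LimitPerm

variable {Z : ℝ → ℝ → ℝ} (hZ : LimitPerm Z)
include hZ

theorem aemeasurable_section {y : ℝ} (hy : y ∈ Icc (0 : ℝ) 1) :
    AEMeasurable (fun x => Z x y) (volume.restrict (Icc 0 1)) := by
  rw [aemeasurable_restrict_iff_comap_subtype measurableSet_Icc]
  have hpair : Measurable fun x : Icc (0 : ℝ) 1 => (x, (⟨y, hy⟩ : Icc (0 : ℝ) 1)) :=
    measurable_id.prodMk measurable_const
  exact (hZ.1.comp hpair).aemeasurable

theorem integrableOn_section {y : ℝ} (hy : y ∈ Icc (0 : ℝ) 1) :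
    IntegrableOn (fun x => Z x y) (Icc 0 1) := by
  refine Integrable.of_bound (hZ.aemeasurable_section hy).aestronglyMeasurable 1
    (ae_restrict_of_forall_mem measurableSet_Icc fun x hx => ?_)
  have hmem := (hZ.2.1 x hx).1.2.2.2 y hy
  rw [Real.norm_eq_abs, abs_le]
  exact ⟨by linarith [hmem.1], hmem.2⟩

theorem aemeasurable_cellMass {m k : ℕ} (hk : k < m) :
    AEMeasurable (cellMass Z m k) (volume.restrict (Icc 0 1)) :=
  ((hZ.aemeasurable_section (natCast_div_mem_Icc hk)).sub
    (hZ.aemeasurable_section (natCast_div_mem_Icc hk.le))).ennreal_ofReal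

theorem lintegral_cellMass {m k : ℕ} (hk : k < m) :
    ∫⁻ x in Icc (0 : ℝ) 1, cellMass Z m k x = (m : ℝ≥0∞)⁻¹ := by
  have ha := natCast_div_mem_Icc hk.le
  have hb := natCast_div_mem_Icc hk
  have hab : (k / m : ℝ) ≤ ((k + 1 : ℕ) / m : ℝ) :=
    div_le_div_of_nonneg_right (by exact_mod_cast k.le_succ) (Nat.cast_nonneg m)
  have hnonneg : 0 ≤ᵐ[volume.restrict (Icc 0 1)] fun x => Z x ((k + 1 : ℕ) / m) - Z x (k / m) :=
    ae_restrict_of_forall_mem measurableSet_Icc fun x hx =>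
      sub_nonneg.2 ((hZ.2.1 x hx).1.1 ha hb hab)
  have hm : (0 : ℝ) < m := Nat.cast_pos.2 (by omega)
  unfold cellMass
  rw [← ofReal_integral_eq_lintegral_ofReal (f := fun x => Z x ((k + 1 : ℕ) / m) - Z x (k / m))
      ((hZ.integrableOn_section hb).sub (hZ.integrableOn_section ha)) hnonneg,
    integral_sub (hZ.integrableOn_section hb) (hZ.integrableOn_section ha), hZ.2.2 _ hb,
    hZ.2.2 _ ha, ← sub_div, Nat.cast_succ, add_sub_cancel_left, one_div,
    ENNReal.ofReal_inv_of_pos hm, ENNReal.ofReal_natCast]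

theorem aemeasurable_cellMass_mul {m k : ℕ} (hk : k < m) :
    AEMeasurable (fun p : ℝ × ℝ => cellMass Z m k p.1 * cellMass Z m k p.2)
      ((volume.restrict (Icc 0 1)).prod (volume.restrict (Icc 0 1))) :=
  (hZ.aemeasurable_cellMass hk).comp_fst.mul (hZ.aemeasurable_cellMass hk).comp_snd

theorem aemeasurable_sameCellProb (m : ℕ) :
    AEMeasurable (sameCellProb Z m) (volume.restrict (Icc (0 : ℝ) 1 ×ˢ Icc (0 : ℝ) 1)) := by
  rw [Measure.volume_eq_prod, ← Measure.prod_restrict]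
  exact Finset.aemeasurable_fun_sum _ fun k hk =>
    hZ.aemeasurable_cellMass_mul (Finset.mem_range.1 hk)

theorem lintegral_sameCellProb {m : ℕ} (hm : m ≠ 0) :
    ∫⁻ p in Icc (0 : ℝ) 1 ×ˢ Icc (0 : ℝ) 1, sameCellProb Z m p = (m : ℝ≥0∞)⁻¹ := by
  rw [Measure.volume_eq_prod, ← Measure.prod_restrict]
  calc ∫⁻ p, sameCellProb Z m p ∂(volume.restrict (Icc 0 1)).prod (volume.restrict (Icc 0 1))
      = ∑ k ∈ Finset.range m,
          (∫⁻ x in Icc (0 : ℝ) 1, cellMass Z m k x) * ∫⁻ x in Icc (0 : ℝ) 1, cellMass Z m k x := by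
        unfold sameCellProb
        rw [lintegral_finsetSum' _ fun k hk => hZ.aemeasurable_cellMass_mul (Finset.mem_range.1 hk)]
        refine Finset.sum_congr rfl fun k hk => ?_
        have hcell := hZ.aemeasurable_cellMass (Finset.mem_range.1 hk)
        exact lintegral_prod_mul hcell hcell
    _ = m * ((m : ℝ≥0∞)⁻¹ * (m : ℝ≥0∞)⁻¹) := by
        rw [Finset.sum_congr rfl fun k hk => by rw [hZ.lintegral_cellMass (Finset.mem_range.1 hk)],
          Finset.sum_const, Finset.card_range, nsmul_eq_mul]
    _ = (m : ℝ≥0∞)⁻¹ := by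
        rw [← mul_assoc, ENNReal.mul_inv_cancel (by exact_mod_cast hm) (ENNReal.natCast_ne_top m),
          one_mul]

theorem ae_iInf_sameCellProb_eq_zero :
    ∀ᵐ p ∂volume.restrict (Icc (0 : ℝ) 1 ×ˢ Icc (0 : ℝ) 1),
      ⨅ m : ℕ, sameCellProb Z (m + 1) p = 0 := by
  refine ae_iInf_eq_zero_of_tendsto_lintegral (l := atTop)
    (fun m => hZ.aemeasurable_sameCellProb (m + 1)) ?_
  simp_rw [hZ.lintegral_sameCellProb (Nat.succ_ne_zero _)]
  exact_mod_cast ENNReal.tendsto_inv_nat_nhds_zero.comp (tendsto_add_atTop_nat 1)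

theorem ofReal_jump_le_cellMass {x α : ℝ} (hx : x ∈ Icc (0 : ℝ) 1) {m k : ℕ} (hk : k < m)
    (hkα : (k / m : ℝ) ≤ α) (hαk : α < ((k + 1 : ℕ) / m : ℝ)) :
    ENNReal.ofReal (cdfRightLim (Z x) α - Z x α) ≤ cellMass Z m k x :=
  ENNReal.ofReal_le_ofReal <| (hZ.2.1 x hx).1.cdfRightLim_sub_le_sub
    (natCast_div_mem_Icc hk.le).1 hkα hαk (natCast_div_mem_Icc hk).2

theorem ofReal_jump_mul_le_sameCellProb {p : ℝ × ℝ} (hp₁ : p.1 ∈ Icc (0 : ℝ) 1)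
    (hp₂ : p.2 ∈ Icc (0 : ℝ) 1) {α : ℝ} (hα : α ∈ Ico (0 : ℝ) 1) {m : ℕ} (hm : m ≠ 0) :
    ENNReal.ofReal (cdfRightLim (Z p.1) α - Z p.1 α) *
        ENNReal.ofReal (cdfRightLim (Z p.2) α - Z p.2 α) ≤ sameCellProb Z m p := by
  obtain ⟨k, hk, hkα, hαk⟩ := exists_natCast_div_le_lt hm hα
  calc _ ≤ cellMass Z m k p.1 * cellMass Z m k p.2 :=
        mul_le_mul' (hZ.ofReal_jump_le_cellMass hp₁ hk hkα hαk)
          (hZ.ofReal_jump_le_cellMass hp₂ hk hkα hαk)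
    _ ≤ sameCellProb Z m p :=
        Finset.single_le_sum (f := fun k => cellMass Z m k p.1 * cellMass Z m k p.2)
          (fun _ _ => zero_le) (Finset.mem_range.2 hk)

theorem iInf_sameCellProb_pos {p : ℝ × ℝ} (hp₁ : p.1 ∈ Icc (0 : ℝ) 1)
    (hp₂ : p.2 ∈ Icc (0 : ℝ) 1) {α : ℝ} (hα : α ∈ Icc (0 : ℝ) 1)
    (h₁ : cdfDiscontAt (Z p.1) α) (h₂ : cdfDiscontAt (Z p.2) α) :
    0 < ⨅ m : ℕ, sameCellProb Z (m + 1) p := by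
  have hα₁ : α < 1 := hα.2.lt_of_ne (h₁.ne_one (hZ.2.1 _ hp₁).2.2)
  refine lt_of_lt_of_le ?_ (le_iInf fun m =>
    hZ.ofReal_jump_mul_le_sameCellProb hp₁ hp₂ ⟨hα.1, hα₁⟩ m.succ_ne_zero)
  exact ENNReal.mul_pos (ENNReal.ofReal_pos.2 (sub_pos.2 h₁)).ne'
    (ENNReal.ofReal_pos.2 (sub_pos.2 h₂)).ne'

end LimitPerm

/-- the set of pairs `(x₁,x₂) ∈ [0,1]²` such that `Z(x₁,·)` and
`Z(x₂,·)` have a common discontinuity is Lebesgue measurable and null. -/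
theorem common_discontinuity_set_null (Z : ℝ → ℝ → ℝ) (hZ : LimitPerm Z) :
    NullMeasurableSet {p : ℝ × ℝ | p.1 ∈ Set.Icc (0:ℝ) 1 ∧ p.2 ∈ Set.Icc (0:ℝ) 1 ∧
        ∃ α ∈ Set.Icc (0:ℝ) 1, cdfDiscontAt (Z p.1) α ∧ cdfDiscontAt (Z p.2) α} volume ∧
      volume {p : ℝ × ℝ | p.1 ∈ Set.Icc (0:ℝ) 1 ∧ p.2 ∈ Set.Icc (0:ℝ) 1 ∧
        ∃ α ∈ Set.Icc (0:ℝ) 1, cdfDiscontAt (Z p.1) α ∧ cdfDiscontAt (Z p.2) α} = 0 := by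
  have hsmall := hZ.ae_iInf_sameCellProb_eq_zero
  rw [ae_restrict_iff' (measurableSet_Icc.prod measurableSet_Icc), ae_iff] at hsmall
  refine (fun hnull : volume _ = 0 => ⟨.of_null hnull, hnull⟩) (measure_mono_null ?_ hsmall)
  rintro p ⟨hp₁, hp₂, α, hα, h₁, h₂⟩ hzero
  exact (hZ.iInf_sameCellProb_pos hp₁ hp₂ hα h₁ h₂).ne' (hzero ⟨hp₁, hp₂⟩)

end
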